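/- For every ρ ∈ (0,1), every x > 0 and every y with 0 < y < ρx, defining α := α_{ρ,x,y} and β := α·x/y, one has P(S₁ > x, ρS₁ + √(1−ρ²)S₂ > y) = (1/(2π))·[2·I(1, x) − I(α, x) + I(β, y)]. -/

import Mathlib

/-!
Given `R = r > 0`, write `ρ S₁ + √(1 - ρ²) S₂ = r cos (Θ - arccos ρ)`: the event becomes
`|Θ| < arccos (x / r)` and `|Θ - arccos ρ| < arccos (y / r)`, an interval of length `0` for
`r ≤ x`, `2 arccos (x / r)` for `x < r ≤ α x` and `arccos (x / r) + arccos (y / r) - arccos ρ`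
for `r > α x`; `α x` is the radius at which the second constraint starts to cut into the first.
As `arccos (1 / s)` has derivative `1 / (s √(s² - 1))`, Tonelli makes `I(a, x)` the mean of
`tailKernel a x R = ∫_{(a, R / x)} ds / (s √(s² - 1))`, and the length above is
`2 tailKernel 1 x r - tailKernel α x r + tailKernel β y r` because
`arccos (1 / β) = arccos (1 / α) + arccos ρ`.
-/

open MeasureTheory Filter

noncomputable def alphaRho (ρ x y : ℝ) : ℝ :=
  Real.sqrt (1 + (y / x - ρ) ^ 2 / (1 - ρ ^ 2))

noncomputable def tailI (F : ℝ → ℝ) (a x : ℝ) : ℝ :=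
  ∫ s in Set.Ioi a, (1 - F (x * s)) / (s * Real.sqrt (s ^ 2 - 1))

open Set Real
open scoped ENNReal

lemma hasDerivAt_arccos_inv {s : ℝ} (hs : 1 < s) :
    HasDerivAt (fun t ↦ arccos t⁻¹) (s * √(s ^ 2 - 1))⁻¹ s := by
  have hs0 : 0 < s := by linarith
  have hinv : HasDerivAt (fun t : ℝ ↦ t⁻¹) (-(s ^ 2)⁻¹) s := hasDerivAt_inv hs0.ne'
  have hsqrt : √(1 - s⁻¹ ^ 2) = √(s ^ 2 - 1) / s := by
    rw [← sqrt_sq hs0.le, ← sqrt_div' _ (by positivity), sqrt_sq hs0.le]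
    congr 1
    field_simp
  refine ((hasDerivAt_arccos (by linarith [inv_pos.2 hs0]) (inv_lt_one_of_one_lt₀ hs).ne).comp
    s hinv).congr_deriv ?_
  rw [hsqrt]
  field_simp

lemma lintegral_Ioo_inv_mul_sqrt {a c : ℝ} (ha : 1 ≤ a) (hac : a ≤ c) :
    ∫⁻ s in Ioo a c, ENNReal.ofReal (s * √(s ^ 2 - 1))⁻¹ =
      ENNReal.ofReal (arccos c⁻¹ - arccos a⁻¹) := by
  have hcont : ContinuousOn (fun t ↦ arccos t⁻¹) (Icc a c) :=
    continuous_arccos.comp_continuousOn <| continuousOn_inv₀.mono fun s hs ↦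
      (lt_of_lt_of_le one_pos (ha.trans hs.1)).ne'
  have hderiv : ∀ s ∈ Ioo a c, HasDerivAt (fun t ↦ arccos t⁻¹) (s * √(s ^ 2 - 1))⁻¹ s :=
    fun s hs ↦ hasDerivAt_arccos_inv (ha.trans_lt hs.1)
  have hnonneg : ∀ s ∈ Ioo a c, 0 ≤ (s * √(s ^ 2 - 1))⁻¹ := fun s hs ↦ by
    have : 0 ≤ s := by linarith [hs.1]
    positivity
  have hint : IntegrableOn (fun s ↦ (s * √(s ^ 2 - 1))⁻¹) (Ioc a c) :=
    intervalIntegral.integrableOn_deriv_of_nonneg hcont hderiv hnonneg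
  rw [← ofReal_integral_eq_lintegral_ofReal (hint.mono_set Ioo_subset_Ioc_self)
      ((ae_restrict_mem measurableSet_Ioo).mono hnonneg),
    ← integral_Ioc_eq_integral_Ioo, ← intervalIntegral.integral_of_le hac,
    intervalIntegral.integral_eq_sub_of_hasDerivAt_of_le hac hcont hderiv
      ((intervalIntegrable_iff_integrableOn_Ioc_of_le hac).2 hint)]

noncomputable def tailKernel (a x r : ℝ) : ℝ :=
  if a * x < r then arccos (x / r) - arccos a⁻¹ else 0

lemma lintegral_Ioo_eq_tailKernel {a x : ℝ} (ha : 1 ≤ a) (hx : 0 < x) (r : ℝ) :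
    ∫⁻ s in Ioo a (r / x), ENNReal.ofReal (s * √(s ^ 2 - 1))⁻¹ =
      ENNReal.ofReal (tailKernel a x r) := by
  rw [tailKernel]
  split_ifs with h
  · rw [lintegral_Ioo_inv_mul_sqrt ha ((le_div_iff₀ hx).2 h.le), inv_div]
  · rw [Ioo_eq_empty fun h' ↦ h ((lt_div_iff₀ hx).1 h'), Measure.restrict_empty,
      lintegral_zero_measure, ENNReal.ofReal_zero]

lemma tailKernel_nonneg {a x : ℝ} (ha : 1 ≤ a) (hx : 0 ≤ x) (r : ℝ) : 0 ≤ tailKernel a x r := by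
  rw [tailKernel]
  split_ifs with h
  · have hr : 0 < r := by nlinarith
    refine sub_nonneg.2 (antitone_arccos ?_)
    rw [div_le_iff₀ hr, ← div_eq_inv_mul, le_div_iff₀ (by linarith)]
    linarith
  · exact le_rfl

lemma measurable_tailKernel (a x : ℝ) : Measurable (tailKernel a x) :=
  Measurable.ite (measurableSet_lt measurable_const measurable_id)
    ((continuous_arccos.measurable.comp (measurable_const.div measurable_id)).sub
      measurable_const) measurable_const

lemma abs_tailKernel_le {a x : ℝ} (ha : 1 ≤ a) (hx : 0 ≤ x) (r : ℝ) : |tailKernel a x r| ≤ π := by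
  rw [abs_of_nonneg (tailKernel_nonneg ha hx r), tailKernel]
  split_ifs
  · linarith [arccos_le_pi (x / r), arccos_nonneg a⁻¹]
  · exact pi_pos.le

lemma integrable_tailKernel (ν : Measure ℝ) [IsFiniteMeasure ν] {a x : ℝ} (ha : 1 ≤ a)
    (hx : 0 ≤ x) : Integrable (tailKernel a x) ν :=
  (integrable_const π).mono' (measurable_tailKernel a x).aestronglyMeasurable
    (.of_forall (abs_tailKernel_le ha hx))

lemma lintegral_Ioi_measure_Ioi_mul (ν : Measure ℝ) [SFinite ν] {g : ℝ → ℝ≥0∞}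
    (hg : Measurable g) {x : ℝ} (hx : 0 < x) (a : ℝ) :
    ∫⁻ s in Ioi a, ν (Ioi (x * s)) * g s = ∫⁻ r, (∫⁻ s in Ioo a (r / x), g s) ∂ν := by
  have hmeas : Measurable (Function.uncurry fun s r ↦ (Ioi (x * s)).indicator (fun _ ↦ g s) r) :=
    (hg.comp measurable_fst).indicator
      (measurableSet_lt (measurable_const.mul measurable_fst) measurable_snd)
  have hsection : ∀ s r, (Ioi (x * s)).indicator (fun _ ↦ g s) r = (Iio (r / x)).indicator g s :=
    fun s r ↦ by simp only [indicator_apply, mem_Ioi, mem_Iio, lt_div_iff₀ hx, mul_comm x]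
  calc ∫⁻ s in Ioi a, ν (Ioi (x * s)) * g s
      = ∫⁻ s in Ioi a, ∫⁻ r, (Ioi (x * s)).indicator (fun _ ↦ g s) r ∂ν := by
        simp only [lintegral_indicator_const measurableSet_Ioi, mul_comm]
    _ = ∫⁻ r, (∫⁻ s in Ioi a, (Ioi (x * s)).indicator (fun _ ↦ g s) r) ∂ν :=
        lintegral_lintegral_swap hmeas.aemeasurable
    _ = ∫⁻ r, (∫⁻ s in Ioo a (r / x), g s) ∂ν := by
        simp only [hsection, lintegral_indicator measurableSet_Iio,
          Measure.restrict_restrict measurableSet_Iio, Iio_inter_Ioi]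

lemma tailI_eq_integral_tailKernel (ν : Measure ℝ) [IsProbabilityMeasure ν] {F : ℝ → ℝ}
    (hF : ∀ t, F t = ν.real (Iic t)) {a x : ℝ} (ha : 1 ≤ a) (hx : 0 < x) :
    tailI F a x = ∫ r, tailKernel a x r ∂ν := by
  have htail : ∀ t, 1 - F t = ν.real (Ioi t) := fun t ↦ by
    rw [hF, ← compl_Iic, probReal_compl_eq_one_sub measurableSet_Iic]
  have hweight : Measurable fun s : ℝ ↦ ENNReal.ofReal (s * √(s ^ 2 - 1))⁻¹ := by fun_prop
  have hanti : Antitone fun s ↦ ν (Ioi (x * s)) := fun s t hst ↦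
    measure_mono (Ioi_subset_Ioi (mul_le_mul_of_nonneg_left hst hx.le))
  calc tailI F a x
      = ∫ s in Ioi a, (ν (Ioi (x * s)) * ENNReal.ofReal (s * √(s ^ 2 - 1))⁻¹).toReal := by
        refine setIntegral_congr_fun measurableSet_Ioi fun s hs ↦ ?_
        have : 0 ≤ s := by linarith [mem_Ioi.1 hs]
        rw [ENNReal.toReal_mul, ENNReal.toReal_ofReal (by positivity), div_eq_mul_inv, htail]
        rfl
    _ = (∫⁻ s in Ioi a, ν (Ioi (x * s)) * ENNReal.ofReal (s * √(s ^ 2 - 1))⁻¹).toReal :=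
        integral_toReal (hanti.measurable.mul hweight).aemeasurable
          (.of_forall fun s ↦ ENNReal.mul_lt_top (measure_lt_top ν _) ENNReal.ofReal_lt_top)
    _ = (∫⁻ r, ENNReal.ofReal (tailKernel a x r) ∂ν).toReal := by
        simp only [lintegral_Ioi_measure_Ioi_mul ν hweight hx, lintegral_Ioo_eq_tailKernel ha hx]
    _ = ∫ r, tailKernel a x r ∂ν := by
        rw [← integral_toReal (measurable_tailKernel a x).ennreal_ofReal.aemeasurable
          (.of_forall fun _ ↦ ENNReal.ofReal_lt_top)]
        simp only [ENNReal.toReal_ofReal (tailKernel_nonneg ha hx.le _)]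

lemma lt_cos_iff_abs_lt_arccos {t θ : ℝ} (ht : -1 ≤ t) (ht' : t ≤ 1) (hθ : |θ| ≤ π) :
    t < cos θ ↔ |θ| < arccos t := by
  rw [← cos_abs, ← strictAntiOn_arccos.lt_iff_gt ⟨neg_one_le_cos _, cos_le_one _⟩
    ⟨ht, ht'⟩, arccos_cos (abs_nonneg θ) hθ]

lemma cos_sub_arccos {ρ : ℝ} (hρ : -1 ≤ ρ) (hρ' : ρ ≤ 1) (θ : ℝ) :
    cos (θ - arccos ρ) = ρ * cos θ + √(1 - ρ ^ 2) * sin θ := by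
  rw [cos_sub, cos_arccos hρ hρ', sin_arccos]
  ring

lemma cos_arccos_add_arccos {s t : ℝ} (hs : -1 ≤ s) (hs' : s ≤ 1) (ht : -1 ≤ t) (ht' : t ≤ 1) :
    cos (arccos s + arccos t) = s * t - √((1 - s ^ 2) * (1 - t ^ 2)) := by
  rw [cos_add, cos_arccos hs hs', cos_arccos ht ht', sin_arccos, sin_arccos,
    sqrt_mul (by nlinarith)]

lemma alphaRho_mul_sq {ρ x y : ℝ} (hρ : ρ ^ 2 ≤ 1) (hx : x ≠ 0) :
    (alphaRho ρ x y * x) ^ 2 = x ^ 2 + (ρ * x - y) ^ 2 / (1 - ρ ^ 2) := by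
  have : 0 ≤ 1 - ρ ^ 2 := by linarith
  rw [mul_pow, alphaRho, sq_sqrt (by positivity), show y / x - ρ = -(ρ * x - y) / x by
    field_simp; ring]
  field_simp

lemma one_le_alphaRho {ρ : ℝ} (hρ : ρ ^ 2 ≤ 1) (x y : ℝ) : 1 ≤ alphaRho ρ x y := by
  have : 0 ≤ (y / x - ρ) ^ 2 / (1 - ρ ^ 2) := div_nonneg (sq_nonneg _) (by linarith)
  rw [alphaRho, one_le_sqrt]
  linarith

lemma arccos_add_arccos_le_arccos_iff {ρ x y r : ℝ} (hρ0 : 0 ≤ ρ) (hρ1 : ρ < 1) (hx : 0 < x)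
    (hyx : y ≤ ρ * x) (hxr : x < r) (hy : -r ≤ y) :
    arccos (x / r) + arccos ρ ≤ arccos (y / r) ↔ r ≤ alphaRho ρ x y * x := by
  have hr : 0 < r := hx.trans hxr
  have hρ : 0 < 1 - ρ ^ 2 := by nlinarith
  have hxr' : x / r ≤ 1 := (div_le_one hr).2 hxr.le
  have hsum : arccos (x / r) + arccos ρ ∈ Icc 0 π := by
    have := arccos_le_pi_div_two.2 (div_nonneg hx.le hr.le)
    have := arccos_le_pi_div_two.2 hρ0
    exact ⟨add_nonneg (arccos_nonneg _) (arccos_nonneg _), by linarith⟩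
  rw [← strictAntiOn_cos.le_iff_ge ⟨arccos_nonneg _, arccos_le_pi _⟩ hsum,
    cos_arccos ((le_div_iff₀ hr).2 (by linarith)) ((div_le_one hr).2 (by nlinarith)),
    cos_arccos_add_arccos (by linarith [div_nonneg hx.le hr.le]) hxr' (by linarith) hρ1.le]
  have hα := one_le_alphaRho (by nlinarith : ρ ^ 2 ≤ 1) x y
  have hαx : 0 ≤ alphaRho ρ x y * x := mul_nonneg (by linarith) hx.le
  calc y / r ≤ x / r * ρ - √((1 - (x / r) ^ 2) * (1 - ρ ^ 2))
      ↔ √((1 - (x / r) ^ 2) * (1 - ρ ^ 2)) ≤ x / r * ρ - y / r := by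
        constructor <;> intro <;> linarith
    _ ↔ (1 - (x / r) ^ 2) * (1 - ρ ^ 2) ≤ (x / r * ρ - y / r) ^ 2 :=
        sqrt_le_left (by
          rw [mul_comm, ← mul_div_assoc, ← sub_div]
          exact div_nonneg (by linarith) hr.le)
    _ ↔ (r ^ 2 - x ^ 2) * (1 - ρ ^ 2) ≤ (ρ * x - y) ^ 2 := by
        rw [show (1 - (x / r) ^ 2) * (1 - ρ ^ 2) = (r ^ 2 - x ^ 2) * (1 - ρ ^ 2) / r ^ 2 by
          field_simp, show (x / r * ρ - y / r) ^ 2 = (ρ * x - y) ^ 2 / r ^ 2 by field_simp,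
          div_le_div_iff_of_pos_right (by positivity)]
    _ ↔ r ^ 2 ≤ (alphaRho ρ x y * x) ^ 2 := by
        rw [alphaRho_mul_sq (by nlinarith) hx.ne', ← sub_le_iff_le_add', le_div_iff₀ hρ]
    _ ↔ r ≤ alphaRho ρ x y * x := pow_le_pow_iff_left₀ hr.le hαx two_ne_zero

lemma arccos_inv_alphaRho_mul_div {ρ x y : ℝ} (hρ0 : 0 ≤ ρ) (hρ1 : ρ < 1) (hx : 0 < x)
    (hyx : y ≤ ρ * x) :
    arccos (alphaRho ρ x y * x / y)⁻¹ = arccos (alphaRho ρ x y)⁻¹ + arccos ρ := by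
  have hρ : 0 < 1 - ρ ^ 2 := by nlinarith
  have hα := one_le_alphaRho (by nlinarith : ρ ^ 2 ≤ 1) x y
  have hα0 : 0 < alphaRho ρ x y := by linarith
  have hsq := alphaRho_mul_sq (y := y) (by nlinarith : ρ ^ 2 ≤ 1) hx.ne'
  have hcos : cos (arccos (alphaRho ρ x y)⁻¹ + arccos ρ) = y / (alphaRho ρ x y * x) := by
    rw [cos_arccos_add_arccos (by linarith [inv_nonneg.2 hα0.le]) (inv_le_one_of_one_le₀ hα)
      (by linarith) hρ1.le]
    have : (1 - (alphaRho ρ x y)⁻¹ ^ 2) * (1 - ρ ^ 2) =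
        ((ρ * x - y) / (alphaRho ρ x y * x)) ^ 2 := by
      have h : ((alphaRho ρ x y * x) ^ 2 - x ^ 2) * (1 - ρ ^ 2) = (ρ * x - y) ^ 2 := by
        rw [hsq]
        field_simp
        ring
      field_simp
      linear_combination h
    rw [this, sqrt_sq (div_nonneg (by linarith) (by positivity))]
    field_simp
    ring
  have hsum : arccos (alphaRho ρ x y)⁻¹ + arccos ρ ∈ Icc 0 π := by
    have := arccos_le_pi_div_two.2 (inv_nonneg.2 hα0.le)
    have := arccos_le_pi_div_two.2 hρ0
    exact ⟨add_nonneg (arccos_nonneg _) (arccos_nonneg _), by linarith⟩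
  rw [inv_div, ← hcos, arccos_cos hsum.1 hsum.2]

lemma setOf_lt_cos_inter_Ioo {ρ x y r : ℝ} (hρ0 : 0 ≤ ρ) (hρ1 : ρ ≤ 1) (hx : 0 ≤ x)
    (hxr : x < r) (hy : -r ≤ y) (hyx : y ≤ x) :
    {θ | x < r * cos θ ∧ y < ρ * (r * cos θ) + √(1 - ρ ^ 2) * (r * sin θ)} ∩ Ioo (-π) π =
      Ioo (max (-arccos (x / r)) (arccos ρ - arccos (y / r))) (arccos (x / r)) := by
  have hr : 0 < r := hx.trans_lt hxr
  have hxr' : x / r ≤ 1 := (div_le_one hr).2 hxr.le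
  have hxr0 : 0 ≤ x / r := div_nonneg hx hr.le
  have hyr : -1 ≤ y / r := (le_div_iff₀ hr).2 (by linarith)
  have hyxr : y / r ≤ x / r := div_le_div_of_nonneg_right hyx hr.le
  have hcx := arccos_le_pi_div_two.2 hxr0
  have hφ := arccos_le_pi_div_two.2 hρ0
  have hφ0 := arccos_nonneg ρ
  have hcxy : arccos (x / r) ≤ arccos (y / r) := arccos_le_arccos hyxr
  have hrot : ∀ θ, ρ * (r * cos θ) + √(1 - ρ ^ 2) * (r * sin θ) = r * cos (θ - arccos ρ) :=
    fun θ ↦ by rw [cos_sub_arccos (by linarith) hρ1]; ring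
  ext θ
  simp only [mem_inter_iff, mem_ofPred_eq, mem_Ioo, max_lt_iff, hrot, ← div_lt_iff₀' hr]
  constructor
  · rintro ⟨⟨hcos, hcos'⟩, hθ⟩
    have h1 := (lt_cos_iff_abs_lt_arccos (by linarith) hxr'
      (abs_le.2 ⟨hθ.1.le, hθ.2.le⟩)).1 hcos
    rw [abs_lt] at h1
    have h2 := (lt_cos_iff_abs_lt_arccos hyr (hyxr.trans hxr')
      (abs_le.2 ⟨by linarith, by linarith⟩)).1 hcos'
    rw [abs_lt] at h2
    exact ⟨⟨h1.1, by linarith⟩, h1.2⟩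
  · rintro ⟨⟨hl, hl'⟩, hu⟩
    have h1 : |θ| < arccos (x / r) := abs_lt.2 ⟨hl, hu⟩
    have h2 : |θ - arccos ρ| < arccos (y / r) := abs_lt.2 ⟨by linarith, by linarith⟩
    refine ⟨⟨?_, ?_⟩, by linarith, by linarith⟩
    · exact (lt_cos_iff_abs_lt_arccos (by linarith) hxr'
        (abs_le.2 ⟨by linarith, by linarith⟩)).2 h1
    · exact (lt_cos_iff_abs_lt_arccos hyr (hyxr.trans hxr')
        (abs_le.2 ⟨by linarith, by linarith⟩)).2 h2

lemma volume_real_setOf_lt_cos_inter_Ioo {ρ x y r : ℝ} (hρ0 : 0 ≤ ρ) (hρ1 : ρ < 1) (hx : 0 < x)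
    (hy : 0 < y) (hyx : y ≤ ρ * x) (hr : 0 < r) :
    volume.real ({θ | x < r * cos θ ∧ y < ρ * (r * cos θ) + √(1 - ρ ^ 2) * (r * sin θ)} ∩
      Ioo (-π) π) = 2 * tailKernel 1 x r - tailKernel (alphaRho ρ x y) x r +
        tailKernel (alphaRho ρ x y * x / y) y r := by
  have hα := one_le_alphaRho (by nlinarith : ρ ^ 2 ≤ 1) x y
  have hβ : alphaRho ρ x y * x / y * y = alphaRho ρ x y * x := div_mul_cancel₀ _ hy.ne'
  rcases le_or_gt r x with hrx | hxr
  · have hempty : {θ | x < r * cos θ ∧ y < ρ * (r * cos θ) + √(1 - ρ ^ 2) * (r * sin θ)} = ∅ :=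
      eq_empty_of_forall_notMem fun θ hθ ↦
        hθ.1.not_ge (hrx.trans' (mul_le_of_le_one_right hr.le (cos_le_one θ)))
    have hαx : r ≤ alphaRho ρ x y * x := by nlinarith
    simp only [hempty, empty_inter, measureReal_empty, tailKernel, hβ, one_mul,
      if_neg hrx.not_gt, if_neg hαx.not_gt]
    ring
  have hφ : arccos ρ ≤ arccos (y / r) :=
    arccos_le_arccos ((div_le_iff₀ hr).2 (by nlinarith))
  rw [setOf_lt_cos_inter_Ioo hρ0 hρ1.le hx.le hxr (by linarith) (by nlinarith)]
  simp only [tailKernel, hβ, one_mul, if_pos hxr, inv_one, arccos_one, sub_zero]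
  rcases le_or_gt r (alphaRho ρ x y * x) with hαx | hαx
  · have hmax : arccos ρ - arccos (y / r) ≤ -arccos (x / r) := by
      linarith [(arccos_add_arccos_le_arccos_iff hρ0 hρ1 hx hyx hxr (by linarith)).2 hαx]
    rw [max_eq_left hmax, volume_real_Ioo_of_le (by linarith [arccos_nonneg (x / r)]),
      if_neg hαx.not_gt, if_neg hαx.not_gt]
    ring
  · have hmax : -arccos (x / r) ≤ arccos ρ - arccos (y / r) := by
      linarith [(arccos_add_arccos_le_arccos_iff hρ0 hρ1 hx hyx hxr (by linarith)).not.2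
        hαx.not_ge]
    rw [max_eq_right hmax, volume_real_Ioo_of_le (by linarith [arccos_nonneg (x / r)]),
      if_pos hαx, if_pos hαx, arccos_inv_alphaRho_mul_div hρ0 hρ1 hx hyx]
    ring

lemma integral_tailKernel_combination (ν : Measure ℝ) [IsProbabilityMeasure ν] {F : ℝ → ℝ}
    (hF : ∀ t, F t = ν.real (Iic t)) {ρ x y : ℝ} (hρ : ρ ^ 2 ≤ 1) (hx : 0 < x) (hy : 0 < y)
    (hyx : y ≤ x) :
    ∫ r, (2 * tailKernel 1 x r - tailKernel (alphaRho ρ x y) x r +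
      tailKernel (alphaRho ρ x y * x / y) y r) ∂ν =
      2 * tailI F 1 x - tailI F (alphaRho ρ x y) x + tailI F (alphaRho ρ x y * x / y) y := by
  have hα := one_le_alphaRho hρ x y
  have hβ : 1 ≤ alphaRho ρ x y * x / y := (one_le_div hy).2 (by nlinarith)
  have h1 := integrable_tailKernel ν le_rfl hx.le
  have hα' := integrable_tailKernel ν hα hx.le
  rw [integral_add (by exact (h1.const_mul 2).sub hα') (integrable_tailKernel ν hβ hy.le),
    integral_sub (h1.const_mul 2) hα', integral_const_mul,
    tailI_eq_integral_tailKernel ν hF le_rfl hx, tailI_eq_integral_tailKernel ν hF hα hx,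
    tailI_eq_integral_tailKernel ν hF hβ hy]

lemma ProbabilityTheory.IndepFun.measureReal_preimage_eq_integral {Ω α β : Type*}
    [MeasurableSpace Ω] [MeasurableSpace α] [MeasurableSpace β] {μ : Measure Ω}
    [IsFiniteMeasure μ] {X : Ω → α} {Y : Ω → β} (hXY : ProbabilityTheory.IndepFun X Y μ)
    (hX : Measurable X) (hY : Measurable Y) {S : Set (α × β)} (hS : MeasurableSet S) :
    μ.real ((fun ω ↦ (X ω, Y ω)) ⁻¹' S) = ∫ a, (μ.map Y).real (Prod.mk a ⁻¹' S) ∂μ.map X := by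
  rw [measureReal_def, ← Measure.map_apply (hX.prodMk hY) hS,
    hXY.map_prod_eq_prod_map_map hX.aemeasurable hY.aemeasurable, Measure.prod_apply hS]
  exact (integral_toReal (measurable_measure_prodMk_left hS).aemeasurable
    (.of_forall fun _ ↦ measure_lt_top _ _)).symm

theorem stmt8
    {Ω : Type*} [MeasurableSpace Ω] (μ : Measure Ω) [IsProbabilityMeasure μ]
    (R Θ : Ω → ℝ) (hRmeas : Measurable R) (hΘmeas : Measurable Θ)
    (hIndep : ProbabilityTheory.IndepFun R Θ μ)
    (hΘlaw : Measure.map Θ μ =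
      (ENNReal.ofReal (2 * Real.pi))⁻¹ • volume.restrict (Set.Ioo (-Real.pi) Real.pi))
    (F : ℝ → ℝ) (hFdist : ∀ t : ℝ, F t = (μ {ω | R ω ≤ t}).toReal)
    (hF0 : F 0 = 0) :
    ∀ ρ : ℝ, 0 < ρ → ρ < 1 → ∀ x > (0 : ℝ), ∀ y : ℝ, 0 < y → y < ρ * x →
      (μ {ω | x < R ω * Real.cos (Θ ω) ∧
          y < ρ * (R ω * Real.cos (Θ ω)) +
            Real.sqrt (1 - ρ ^ 2) * (R ω * Real.sin (Θ ω))}).toReal =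
        (1 / (2 * Real.pi)) *
          (2 * tailI F 1 x - tailI F (alphaRho ρ x y) x +
            tailI F (alphaRho ρ x y * x / y) y) := by
  intro ρ hρ0 hρ1 x hx y hy hyx
  have : IsProbabilityMeasure (μ.map R) := Measure.isProbabilityMeasure_map hRmeas.aemeasurable
  have hF : ∀ t, F t = (μ.map R).real (Iic t) := fun t ↦ by
    rw [hFdist, map_measureReal_apply hRmeas measurableSet_Iic]
    rfl
  have hpos : ∀ᵐ r ∂μ.map R, 0 < r := by
    rw [hF, measureReal_eq_zero_iff] at hF0
    exact ae_iff.2 (measure_mono_null (fun r hr ↦ not_lt.1 hr) hF0)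
  have hS : MeasurableSet {p : ℝ × ℝ | x < p.1 * cos p.2 ∧
      y < ρ * (p.1 * cos p.2) + √(1 - ρ ^ 2) * (p.1 * sin p.2)} := by
    measurability
  have hsection : ∀ᵐ r ∂μ.map R, (μ.map Θ).real {θ | x < r * cos θ ∧
      y < ρ * (r * cos θ) + √(1 - ρ ^ 2) * (r * sin θ)} = 1 / (2 * π) *
        (2 * tailKernel 1 x r - tailKernel (alphaRho ρ x y) x r +
          tailKernel (alphaRho ρ x y * x / y) y r) := by
    filter_upwards [hpos] with r hr
    rw [hΘlaw, measureReal_ennreal_smul_apply, measureReal_restrict_apply' measurableSet_Ioo,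
      volume_real_setOf_lt_cos_inter_Ioo hρ0.le hρ1 hx hy hyx.le hr, ENNReal.toReal_inv,
      ENNReal.toReal_ofReal (by positivity), one_div]
  refine ((hIndep.measureReal_preimage_eq_integral hRmeas hΘmeas hS).trans
    (integral_congr_ae hsection)).trans ?_
  rw [integral_const_mul,
    integral_tailKernel_combination _ hF (by nlinarith) hx hy (by nlinarith)]
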